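/- arXiv:0909.4368 — 7 statements merged into one kernel-verified Lean document; each statement's English description precedes it below -/
import Mathlib

section
/- If G is an unmixed graph with 2n non-isolated vertices such that the minimum cardinality of a vertex cover equals n, then G has a perfect matching. -/
open SimpleGraph

/-- `C` is a vertex cover of `G`. -/
def IsVC {V : Type*} (G : SimpleGraph V) (C : Set V) : Prop :=
  ∀ ⦃u v : V⦄, G.Adj u v → u ∈ C ∨ v ∈ C

/-- `C` is a minimal (inclusion-wise) vertex cover of `G`. -/
def IsMinVC {V : Type*} (G : SimpleGraph V) (C : Set V) : Prop :=
  IsVC G C ∧ ∀ C' : Set V, C' ⊆ C → IsVC G C' → C' = C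

/-- `A` is an independent set of `G`. -/
def IsIndep {V : Type*} (G : SimpleGraph V) (A : Set V) : Prop :=
  ∀ ⦃u v : V⦄, u ∈ A → v ∈ A → ¬ G.Adj u v

/-- `A` is a maximal independent set of `G`. -/
def IsMaxIndep {V : Type*} (G : SimpleGraph V) (A : Set V) : Prop :=
  IsIndep G A ∧ ∀ A' : Set V, A ⊆ A' → IsIndep G A' → A' = A

/-- `G` is unmixed: all minimal vertex covers have the same cardinality. -/
def Unmixed {V : Type*} (G : SimpleGraph V) : Prop :=
  ∀ C₁ C₂ : Set V, IsMinVC G C₁ → IsMinVC G C₂ → C₁.ncard = C₂.ncard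

/-!
Complements of minimal vertex covers are exactly the maximal independent sets, so an unmixed graph
is well-covered: all its maximal independent sets have the same size. In a well-covered graph every
independent set `S` of non-isolated vertices satisfies `|S| ≤ |N(S)|`, where `N(S) = nbhd G S`.
The complement `A` of a minimum vertex cover is independent and, by the cardinality assumptions, as
large as the cover itself, so Hall's theorem matches `A` bijectively onto its complement along
edges of `G`.

The inequality `|S| ≤ |N(S)|` is proved by induction on `S`. Let `W` be a maximal independent
subset of `N(S)` and `S' = S \ N(W)`. A maximal independent set containing `W ∪ S'` meets
`S ∪ N(S)` only in `W ∪ S'`; its part `R` outside `S ∪ N(S)` extends `S` to an independent set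
`S ∪ R`. Comparing with a maximal independent set containing `S ∪ R` gives `|S| ≤ |W| + |S'|`,
while induction gives `|S'| ≤ |N(S')| ≤ |N(S)| - |W|`.
-/

def WellCovered {V : Type*} (G : SimpleGraph V) : Prop :=
  ∀ I J : Set V, IsMaxIndep G I → IsMaxIndep G J → I.ncard = J.ncard

def nbhd {V : Type*} (G : SimpleGraph V) (S : Set V) : Set V :=
  {v | ∃ s ∈ S, G.Adj s v}

section

variable {V : Type*} {G : SimpleGraph V} {A B C S W : Set V}

lemma IsVC.isIndep_compl (h : IsVC G C) : IsIndep G Cᶜ := fun _ _ hu hv huv =>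
  (h huv).elim hu hv

lemma IsIndep.isVC_compl (h : IsIndep G A) : IsVC G Aᶜ := fun u v huv => by
  by_contra! hc
  exact h (Set.notMem_compl_iff.mp hc.1) (Set.notMem_compl_iff.mp hc.2) huv

lemma IsIndep.mono (h : IsIndep G B) (hAB : A ⊆ B) : IsIndep G A := fun _ _ hu hv =>
  h (hAB hu) (hAB hv)

lemma isIndep_union :
    IsIndep G (A ∪ B) ↔ IsIndep G A ∧ IsIndep G B ∧ ∀ a ∈ A, ∀ b ∈ B, ¬ G.Adj a b := by
  refine ⟨fun h => ⟨h.mono Set.subset_union_left, h.mono Set.subset_union_right,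
    fun a ha b hb => h (Or.inl ha) (Or.inr hb)⟩, fun ⟨hA, hB, hAB⟩ => ?_⟩
  rintro u v (hu | hu) (hv | hv) huv
  exacts [hA hu hv huv, hAB u hu v hv huv, hAB v hv u hu huv.symm, hB hu hv huv]

lemma isMaxIndep_iff_maximal : IsMaxIndep G A ↔ Maximal (IsIndep G) A :=
  ⟨fun h => ⟨h.1, fun B hB hAB => (h.2 B hAB hB).le⟩,
    fun h => ⟨h.1, fun _ hAB hB => (h.2 hB hAB).antisymm hAB⟩⟩

lemma IsMaxIndep.isMinVC_compl (h : IsMaxIndep G A) : IsMinVC G Aᶜ := by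
  refine ⟨h.1.isVC_compl, fun C hC hCvc => ?_⟩
  rw [← compl_compl C, h.2 Cᶜ (Set.subset_compl_comm.mp hC) hCvc.isIndep_compl]

lemma IsVC.exists_isMinVC_subset [Finite V] (h : IsVC G C) : ∃ C₀ ⊆ C, IsMinVC G C₀ := by
  obtain ⟨C₀, hC₀C, hC₀⟩ := Finite.exists_le_minimal (p := IsVC G) h
  exact ⟨C₀, hC₀C, hC₀.1, fun C' hC' hvc => (hC₀.2 hvc hC').antisymm' hC'⟩

lemma IsIndep.exists_isMaxIndep_superset [Finite V] (h : IsIndep G A) :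
    ∃ J, A ⊆ J ∧ IsMaxIndep G J := by
  obtain ⟨J, hAJ, hJ⟩ := Finite.exists_le_maximal h
  exact ⟨J, hAJ, isMaxIndep_iff_maximal.mpr hJ⟩

lemma exists_isIndep_subset_forall_adj [Finite V] (T : Set V) :
    ∃ W ⊆ T, IsIndep G W ∧ ∀ t ∈ T, t ∉ W → ∃ w ∈ W, G.Adj t w := by
  obtain ⟨W, -, hW⟩ := Finite.exists_le_maximal (p := fun W => W ⊆ T ∧ IsIndep G W)
    (a := ∅) ⟨Set.empty_subset T, fun _ _ hu => hu.elim⟩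
  refine ⟨W, hW.1.1, hW.1.2, fun t ht htW => ?_⟩
  by_contra! hno
  have hins : insert t W ⊆ T ∧ IsIndep G ({t} ∪ W) :=
    ⟨Set.insert_subset ht hW.1.1, isIndep_union.mpr ⟨by rintro u v rfl rfl; exact G.irrefl,
      hW.1.2, fun a ha w hw => ha ▸ hno w hw⟩⟩
  exact htW (hW.2 hins (Set.subset_insert t W) (Set.mem_insert t W))

lemma Unmixed.wellCovered [Finite V] (h : Unmixed G) : WellCovered G := fun I J hI hJ => by
  have hIJ := h _ _ hI.isMinVC_compl hJ.isMinVC_compl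
  have hI' := Set.ncard_add_ncard_compl I
  have hJ' := Set.ncard_add_ncard_compl J
  omega

lemma WellCovered.ncard_le_add_ncard_diff_nbhd [Finite V] (hG : WellCovered G)
    (hS : IsIndep G S) (hW : IsIndep G W)
    (hdom : ∀ t ∈ nbhd G S, t ∉ W → ∃ w ∈ W, G.Adj t w) :
    S.ncard ≤ W.ncard + (S \ nbhd G W).ncard := by
  set S' := S \ nbhd G W
  have hWS' : IsIndep G (W ∪ S') := isIndep_union.mpr ⟨hW, hS.mono Set.sdiff_subset,
    fun w hw s hs hws => hs.2 ⟨w, hw, hws⟩⟩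
  obtain ⟨J, hWS'J, hJ⟩ := hWS'.exists_isMaxIndep_superset
  set R := J \ (S ∪ nbhd G S)
  have hSR : IsIndep G (S ∪ R) := isIndep_union.mpr ⟨hS, hJ.1.mono Set.sdiff_subset,
    fun s hs r hr hsr => hr.2 (Or.inr ⟨s, hs, hsr⟩)⟩
  obtain ⟨J', hSRJ', hJ'⟩ := hSR.exists_isMaxIndep_superset
  have hJ_sub : J ⊆ W ∪ S' ∪ R := by
    intro x hxJ
    by_cases hxS : x ∈ S
    · exact Or.inl (Or.inr ⟨hxS, fun ⟨w, hw, hwx⟩ => hJ.1 (hWS'J (Or.inl hw)) hxJ hwx⟩)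
    by_cases hxT : x ∈ nbhd G S
    · by_cases hxW : x ∈ W
      · exact Or.inl (Or.inl hxW)
      obtain ⟨w, hw, hxw⟩ := hdom x hxT hxW
      exact (hJ.1 hxJ (hWS'J (Or.inl hw)) hxw).elim
    · exact Or.inr ⟨hxJ, fun h => h.elim hxS hxT⟩
  have hdisj : Disjoint S R := Set.disjoint_left.mpr fun s hs hr => hr.2 (Or.inl hs)
  have hcount := calc S.ncard + R.ncard
      = (S ∪ R).ncard := (Set.ncard_union_eq hdisj).symm
    _ ≤ J'.ncard := Set.ncard_le_ncard hSRJ'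
    _ = J.ncard := hG _ _ hJ' hJ
    _ ≤ (W ∪ S' ∪ R).ncard := Set.ncard_le_ncard hJ_sub
    _ ≤ W.ncard + S'.ncard + R.ncard :=
      (Set.ncard_union_le _ _).trans (Nat.add_le_add_right (Set.ncard_union_le _ _) _)
  omega

lemma WellCovered.ncard_le_ncard_nbhd [Finite V] (hG : WellCovered G) (hS : IsIndep G S)
    (hni : ∀ s ∈ S, ∃ u, G.Adj u s) : S.ncard ≤ (nbhd G S).ncard := by
  induction S using WellFoundedLT.induction with
  | ind S ih =>
    obtain ⟨W, hWT, hW, hdom⟩ := exists_isIndep_subset_forall_adj (G := G) (nbhd G S)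
    set S' := S \ nbhd G W
    have hS'T : nbhd G S' ⊆ nbhd G S \ W := fun v ⟨s, hs, hsv⟩ =>
      ⟨⟨s, hs.1, hsv⟩, fun hvW => hs.2 ⟨v, hvW, hsv.symm⟩⟩
    have hS' : S'.ncard ≤ (nbhd G S \ W).ncard := by
      rcases S.eq_empty_or_nonempty with rfl | ⟨s, hs⟩
      · simp [S']
      have hS'S : S' ⊂ S := by
        refine Set.ssubset_iff_exists.mpr ⟨Set.sdiff_subset, ?_⟩
        obtain ⟨w, hw⟩ : W.Nonempty := by
          obtain ⟨u, hus⟩ := hni s hs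
          by_cases huW : u ∈ W
          · exact ⟨u, huW⟩
          obtain ⟨w, hw, -⟩ := hdom u ⟨s, hs, hus.symm⟩ huW
          exact ⟨w, hw⟩
        obtain ⟨s₂, hs₂, hs₂w⟩ := hWT hw
        exact ⟨s₂, hs₂, fun h => h.2 ⟨w, hw, hs₂w.symm⟩⟩
      exact (ih S' hS'S (hS.mono Set.sdiff_subset) fun s hs => hni s hs.1).trans
        (Set.ncard_le_ncard hS'T)
    have hexch : S.ncard ≤ W.ncard + S'.ncard := hG.ncard_le_add_ncard_diff_nbhd hS hW hdom
    have hW_add := Set.ncard_sdiff_add_ncard_of_subset hWT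
    omega

lemma exists_isPerfectMatching_of_ncard_le_ncard_nbhd [Finite V] (hA : IsIndep G A)
    (hcard : Aᶜ.ncard ≤ A.ncard) (hall : ∀ S ⊆ A, S.ncard ≤ (nbhd G S).ncard) :
    ∃ M : G.Subgraph, M.IsPerfectMatching := by
  classical
  have := Fintype.ofFinite V
  set t : A → Finset V := fun a => (G.neighborSet a).toFinset
  obtain ⟨f, hf_inj, hf_mem⟩ := (Finset.all_card_le_biUnion_card_iff_exists_injective t).mp
    fun s => by
      have hnbhd : nbhd G (Subtype.val '' (s : Set A)) = ↑(s.biUnion t) := by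
        ext v; simp [nbhd, t]
      have h := hall (Subtype.val '' (s : Set A)) (by simp)
      rwa [hnbhd, Set.ncard_coe_finset, Set.ncard_image_of_injective _ Subtype.val_injective,
        Set.ncard_coe_finset] at h
  have hf_adj (a : A) : G.Adj a (f a) := by simpa [t] using hf_mem a
  let g : A → ↥Aᶜ := fun a => ⟨f a, fun h => hA a.2 h (hf_adj a)⟩
  have hg_inj : g.Injective := fun a b h => hf_inj (congrArg Subtype.val h)
  have hg : g.Bijective :=
    hg_inj.bijective_of_nat_card_le (by rwa [Nat.card_coe_set_eq, Nat.card_coe_set_eq])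
  obtain ⟨M, hM_verts, hM⟩ := Subgraph.IsMatching.exists_of_disjoint_sets_of_equiv
    disjoint_compl_right (Equiv.ofBijective g hg) hf_adj
  exact ⟨M, hM, Subgraph.isSpanning_iff.mpr (hM_verts.trans (Set.union_compl_self A))⟩

end

/-- An unmixed graph with `2n` non-isolated vertices whose minimum vertex cover has
cardinality `n` has a perfect matching. -/
theorem unmixed_half_height_has_perfect_matching {V : Type*} [Fintype V] (G : SimpleGraph V)
    (n : ℕ) (hcard : Fintype.card V = 2 * n)
    (hni : ∀ v : V, ∃ u : V, G.Adj u v) (hu : Unmixed G)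
    (hmin : IsLeast {m : ℕ | ∃ C : Set V, IsVC G C ∧ C.ncard = m} n) :
    ∃ M : G.Subgraph, M.IsPerfectMatching := by
  obtain ⟨C, hC, hCn⟩ := hmin.1
  obtain ⟨C₀, hC₀C, hC₀⟩ := hC.exists_isMinVC_subset
  have hC₀n : C₀.ncard = n :=
    le_antisymm (hCn ▸ Set.ncard_le_ncard hC₀C) (hmin.2 ⟨C₀, hC₀.1, rfl⟩)
  have hcompl : C₀ᶜ.ncard = n := by
    have := Set.ncard_add_ncard_compl C₀
    rw [Nat.card_eq_fintype_card, hcard] at this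
    omega
  have hA : IsIndep G C₀ᶜ := hC₀.1.isIndep_compl
  refine exists_isPerfectMatching_of_ncard_le_ncard_nbhd hA (by rw [compl_compl, hC₀n, hcompl])
    fun S hS => ?_
  exact hu.wellCovered.ncard_le_ncard_nbhd (hA.mono hS) fun s _ => hni s
end

section
/- Let G be a graph on {x_1,...,x_n, y_1,...,y_n} (non-isolated) with X = {x_1,...,x_n} a minimal vertex cover, Y a maximal independent set, x_i y_i ∈ E(G) for all i, and minimum vertex cover size n. If (i) for distinct i,j,k and z_i ∈ {x_i,y_i}, z_i x_j ∈ E(G) and y_j x_k ∈ E(G) imply z_i x_k ∈ E(G), and (ii) x_i y_j ∈ E(G) implies x_i x_j ∉ E(G), then G is unmixed. -/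
open SimpleGraph

/-- Vertex type with the two classes `X = {x_1,…,x_n}` (left) and `Y = {y_1,…,y_n}` (right). -/
abbrev VT (n : ℕ) := Fin n ⊕ Fin n

/-- The vertex `x_i`. -/
def xv {n : ℕ} (i : Fin n) : VT n := Sum.inl i

/-- The vertex `y_i`. -/
def yv {n : ℕ} (i : Fin n) : VT n := Sum.inr i

/-- The 4-cycle `C_{ij}` (edges `x_iy_i, y_ix_j, x_jy_j, y_jx_i`) is contained in `G`. -/
def HasC2 {n : ℕ} (G : SimpleGraph (VT n)) (i j : Fin n) : Prop :=
  G.Adj (xv i) (yv i) ∧ G.Adj (yv i) (xv j) ∧ G.Adj (xv j) (yv j) ∧ G.Adj (yv j) (xv i)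

/-- The `2r`-cycle `C_{i_1…i_r}` given by `f : Fin r → Fin n` is contained in `G`:
edges `x_{f s} y_{f s}` and `y_{f s} x_{f (s+1)}` (cyclically). -/
def IsCycleIn {n r : ℕ} (G : SimpleGraph (VT n)) (f : Fin r → Fin n) : Prop :=
  ∀ s : Fin r, G.Adj (xv (f s)) (yv (f s)) ∧ G.Adj (yv (f s)) (xv (f (finRotate r s)))

/-!
By minimality, every vertex of a minimal vertex cover `C` has a neighbour outside `C`. If both
`x_i` and `y_i` lay in `C`, the neighbour of `y_i` outside `C` would be some `x_j` (as `Y` is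
independent), and conditions (i) and (ii) force the neighbour of `x_i` outside `C` to be adjacent
to `x_j`, an edge that `C` does not cover. So `C` contains exactly one vertex of each edge
`x_i y_i`, and has `n` elements.
-/

theorem IsMinVC.exists_adj_notMem {V : Type*} {G : SimpleGraph V} {C : Set V}
    (hC : IsMinVC G C) {v : V} (hv : v ∈ C) : ∃ u, G.Adj v u ∧ u ∉ C := by
  by_contra! h
  have hcover : IsVC G (C \ {v}) := by
    intro a b hab
    rcases hC.1 hab with ha | hb
    · by_cases hav : a = v
      · subst hav
        exact Or.inr ⟨h b hab, hab.ne'⟩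
      · exact Or.inl ⟨ha, hav⟩
    · by_cases hbv : b = v
      · subst hbv
        exact Or.inl ⟨h a hab.symm, hab.ne⟩
      · exact Or.inr ⟨hb, hbv⟩
  have hv' : v ∈ C \ {v} := (hC.2 _ Set.sdiff_subset hcover).symm ▸ hv
  exact hv'.2 rfl

theorem Set.ncard_eq_of_inl_mem_iff_inr_notMem {α : Type*} {S : Set (α ⊕ α)}
    (hS : ∀ a, Sum.inl a ∈ S ↔ Sum.inr a ∉ S) : S.ncard = Nat.card α := by
  rw [← Set.ncard_univ]
  refine Set.ncard_congr (fun v _ => Sum.elim id id v) (fun _ _ => Set.mem_univ _) ?_ ?_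
  · rintro (a | a) (b | b) ha hb (rfl : a = b)
    exacts [rfl, absurd hb ((hS a).1 ha), absurd ha ((hS a).1 hb), rfl]
  · intro a _
    by_cases ha : Sum.inl a ∈ S
    · exact ⟨_, ha, rfl⟩
    · exact ⟨_, not_not.1 (mt (hS a).2 ha), rfl⟩

section Conditions

variable {n : ℕ} {G : SimpleGraph (VT n)}

theorem IsMinVC.not_xv_mem_and_yv_mem {C : Set (VT n)} (hC : IsMinVC G C)
    (hY : IsIndep G (Set.range (yv : Fin n → VT n)))
    (hm : ∀ i : Fin n, G.Adj (xv i) (yv i))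
    (h1 : ∀ i j k : Fin n, i ≠ j → j ≠ k → i ≠ k →
        ∀ z ∈ ({xv i, yv i} : Set (VT n)),
          G.Adj z (xv j) → G.Adj (yv j) (xv k) → G.Adj z (xv k))
    (h2 : ∀ i j : Fin n, G.Adj (xv i) (yv j) → ¬ G.Adj (xv i) (xv j)) (i : Fin n) :
    ¬ (xv i ∈ C ∧ yv i ∈ C) := by
  rintro ⟨hxi, hyi⟩
  obtain ⟨b, hyb, hbC⟩ := hC.exists_adj_notMem hyi
  obtain ⟨j, rfl⟩ : ∃ j, b = xv j := by
    rcases b with j | j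
    · exact ⟨j, rfl⟩
    · exact absurd hyb (hY ⟨i, rfl⟩ ⟨j, rfl⟩)
  have hij : i ≠ j := by
    rintro rfl
    exact hbC hxi
  have hyj : yv j ∈ C := (hC.1 (hm j)).resolve_left hbC
  obtain ⟨a, hxa, haC⟩ := hC.exists_adj_notMem hxi
  suffices G.Adj a (xv j) from (hC.1 this).elim haC hbC
  rcases a with k | k
  · have hki : k ≠ i := by
      rintro rfl
      exact hxa.ne rfl
    by_cases hkj : k = j
    · subst hkj
      exact absurd hxa.symm (h2 k i hyb.symm)
    · exact h1 k i j hki hij hkj _ (Or.inl rfl) hxa.symm hyb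
  · have hki : k ≠ i := by
      rintro rfl
      exact haC hyi
    have hkj : k ≠ j := by
      rintro rfl
      exact haC hyj
    exact h1 k i j hki hij hkj _ (Or.inr rfl) hxa.symm hyb

end Conditions

theorem conditions_imply_unmixed_general {n : ℕ} (G : SimpleGraph (VT n))
    (hY : IsMaxIndep G (Set.range (yv : Fin n → VT n)))
    (hm : ∀ i : Fin n, G.Adj (xv i) (yv i))
    (h1 : ∀ i j k : Fin n, i ≠ j → j ≠ k → i ≠ k →
        ∀ z ∈ ({xv i, yv i} : Set (VT n)),
          G.Adj z (xv j) → G.Adj (yv j) (xv k) → G.Adj z (xv k))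
    (h2 : ∀ i j : Fin n, G.Adj (xv i) (yv j) → ¬ G.Adj (xv i) (xv j)) :
    Unmixed G := by
  have hcard : ∀ C : Set (VT n), IsMinVC G C → C.ncard = n := by
    intro C hC
    have hS : ∀ i, xv i ∈ C ↔ yv i ∉ C := fun i =>
      ⟨fun hx hy => hC.not_xv_mem_and_yv_mem hY.1 hm h1 h2 i ⟨hx, hy⟩,
        (hC.1 (hm i)).resolve_right⟩
    simpa using Set.ncard_eq_of_inl_mem_iff_inr_notMem hS
  intro C₁ C₂ h₁ h₂
  rw [hcard C₁ h₁, hcard C₂ h₂]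

/-- If `G` (in the setup (*)) satisfies conditions (i) and (ii), then `G` is unmixed. -/
theorem conditions_imply_unmixed {n : ℕ} (G : SimpleGraph (VT n))
    (hni : ∀ v : VT n, ∃ u : VT n, G.Adj u v)
    (hX : IsMinVC G (Set.range (xv : Fin n → VT n)))
    (hY : IsMaxIndep G (Set.range (yv : Fin n → VT n)))
    (hm : ∀ i : Fin n, G.Adj (xv i) (yv i))
    (hht : ∀ C : Set (VT n), IsVC G C → n ≤ C.ncard)
    (h1 : ∀ i j k : Fin n, i ≠ j → j ≠ k → i ≠ k →
        ∀ z ∈ ({xv i, yv i} : Set (VT n)),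
          G.Adj z (xv j) → G.Adj (yv j) (xv k) → G.Adj z (xv k))
    (h2 : ∀ i j : Fin n, G.Adj (xv i) (yv j) → ¬ G.Adj (xv i) (xv j)) :
    Unmixed G :=
  conditions_imply_unmixed_general G hY hm h1 h2
end

section
/- For G an unmixed graph on {x_1,...,x_n,y_1,...,y_n} as in the setup, the sequence x_1 − y_1, ..., x_n − y_n is a system of parameters for S/I(G), where S = K[x_1,...,x_n,y_1,...,y_n]. -/
open SimpleGraph

/-- The edge ideal of a graph `G` in the polynomial ring `K[x_v : v ∈ V]`. -/
noncomputable def edgeIdeal (K : Type*) [Field K] {V : Type*} (G : SimpleGraph V) :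
    Ideal (MvPolynomial V K) :=
  Ideal.span {m : MvPolynomial V K |
    ∃ u v : V, G.Adj u v ∧ m = MvPolynomial.X u * MvPolynomial.X v}

/-- For an unmixed graph `G` in the setup (*), the `n` elements `x_1 - y_1, …, x_n - y_n`
form a system of parameters of `S/I(G)`: the quotient by them is Artinian (zero-dimensional). -/
theorem diffs_are_system_of_parameters (K : Type*) [Field K] {n : ℕ} (G : SimpleGraph (VT n))
    (hni : ∀ v : VT n, ∃ u : VT n, G.Adj u v)
    (hX : IsMinVC G (Set.range (xv : Fin n → VT n)))
    (hY : IsMaxIndep G (Set.range (yv : Fin n → VT n)))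
    (hm : ∀ i : Fin n, G.Adj (xv i) (yv i))
    (hht : ∀ C : Set (VT n), IsVC G C → n ≤ C.ncard)
    (hu : Unmixed G) :
    IsArtinianRing (MvPolynomial (VT n) K ⧸
      (edgeIdeal K G + Ideal.span
        (Set.range fun i : Fin n => MvPolynomial.X (xv i) - MvPolynomial.X (yv i)))) := by
  classical
  set J : Ideal (MvPolynomial (VT n) K) :=
    edgeIdeal K G + Ideal.span
      (Set.range fun i : Fin n => MvPolynomial.X (xv i) - MvPolynomial.X (yv i)) with hJ
  set Q := MvPolynomial (VT n) K ⧸ J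
  -- each X v ^ 2 lies in J
  have hsq : ∀ v : VT n, (MvPolynomial.X v : MvPolynomial (VT n) K) ^ 2 ∈ J := by
    intro v
    have hedge : ∀ i : Fin n,
        (MvPolynomial.X (xv i) * MvPolynomial.X (yv i) : MvPolynomial (VT n) K) ∈ J := by
      intro i
      refine Ideal.mem_sup_left (Ideal.subset_span ?_)
      exact ⟨xv i, yv i, hm i, rfl⟩
    have hdiff : ∀ i : Fin n,
        (MvPolynomial.X (xv i) - MvPolynomial.X (yv i) : MvPolynomial (VT n) K) ∈ J := by
      intro i
      exact Ideal.mem_sup_right (Ideal.subset_span ⟨i, rfl⟩)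
    cases v with
    | inl i =>
      have : (MvPolynomial.X (xv i) : MvPolynomial (VT n) K) ^ 2 =
          MvPolynomial.X (xv i) * (MvPolynomial.X (xv i) - MvPolynomial.X (yv i)) +
          MvPolynomial.X (xv i) * MvPolynomial.X (yv i) := by ring
      rw [show (Sum.inl i : VT n) = xv i from rfl, this]
      exact J.add_mem (J.mul_mem_left _ (hdiff i)) (hedge i)
    | inr i =>
      have : (MvPolynomial.X (yv i) : MvPolynomial (VT n) K) ^ 2 =
          MvPolynomial.X (xv i) * MvPolynomial.X (yv i) -
          MvPolynomial.X (yv i) * (MvPolynomial.X (xv i) - MvPolynomial.X (yv i)) := by ring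
      rw [show (Sum.inr i : VT n) = yv i from rfl, this]
      exact J.sub_mem (hedge i) (J.mul_mem_left _ (hdiff i))
  -- Q is generated as a K-algebra by the images of the variables, each nilpotent
  let mk : MvPolynomial (VT n) K →ₐ[K] Q := Ideal.Quotient.mkₐ K J
  have hmk_surj : Function.Surjective mk := Ideal.Quotient.mkₐ_surjective K J
  have hgen : Algebra.adjoin K
      (Set.range fun v : VT n => mk (MvPolynomial.X v)) = ⊤ := by
    have h1 := MvPolynomial.adjoin_range_X (R := K) (σ := VT n)
    have h2 : Set.range (fun v : VT n => mk (MvPolynomial.X v)) =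
        mk '' Set.range (MvPolynomial.X : VT n → MvPolynomial (VT n) K) := by
      rw [← Set.range_comp]; rfl
    rw [h2, ← AlgHom.map_adjoin, h1, Algebra.map_top]
    exact (AlgHom.range_eq_top mk).mpr hmk_surj
  have hint : ∀ v : VT n, IsIntegral K (mk (MvPolynomial.X v)) := by
    intro v
    refine IsIntegral.of_pow (n := 2) (by norm_num) ?_
    have : mk (MvPolynomial.X v) ^ 2 = 0 := by
      rw [← map_pow]
      exact (Ideal.Quotient.eq_zero_iff_mem (I := J)).mpr (hsq v)
    rw [this]
    exact isIntegral_zero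
  -- hence Q is module-finite over K
  have hfg : (Algebra.adjoin K
      (Set.range fun v : VT n => mk (MvPolynomial.X v))).toSubmodule.FG :=
    fg_adjoin_of_finite (Set.finite_range _) (by rintro x ⟨v, rfl⟩; exact hint v)
  have hfin : Module.Finite K Q := by
    constructor
    rw [hgen] at hfg
    exact hfg
  have hart : IsArtinian K Q := inferInstance
  set_option synthInstance.maxHeartbeats 1000000 in
  exact isArtinian_of_tower K (S := Q) (M := Q) hart
end

section
/- Let G be an unmixed graph as in the setup. If no 4-cycle C_{ij} (with edges x_iy_i, y_ix_j, x_jy_j, y_jx_i) is contained in G for any i < j, then for every r ≥ 2 and every r-subset {i_1,...,i_r} of {1,...,n}, the 2r-cycle C_{i_1...i_r} with edges {x_{i_1}y_{i_1}, y_{i_1}x_{i_2}, x_{i_2}y_{i_2}, ..., x_{i_r}y_{i_r}, y_{i_r}x_{i_1}} is not contained in G. -/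
open SimpleGraph

/-!
In an unmixed graph with the perfect matching `x_a y_a` and minimal vertex cover `X`, every
maximal independent set has `n` elements and meets each pair `{x_a, y_a}` at most once, hence
exactly once. So if `y_i x_j` and `y_j x_k` are edges, no maximal independent set contains both
`y_i` and `x_k` (it would miss `x_j` and `y_j`), i.e. `y_i x_k` is an edge. Walking around a cycle
`C_{i_1…i_r}` with this transitivity gives both `y_{i_1} x_{i_2}` and `y_{i_2} x_{i_1}`, which
together with the matching edges form `C_{i_1 i_2}`.
-/

theorem IsIndep.exists_isMaxIndep {V : Type*} [Finite V] {G : SimpleGraph V} {S : Set V}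
    (hS : IsIndep G S) : ∃ A, S ⊆ A ∧ IsMaxIndep G A := by
  obtain ⟨A, ⟨hSA, hA⟩, hmax⟩ := Set.Finite.exists_maximalFor id
    {B : Set V | S ⊆ B ∧ IsIndep G B} (Set.toFinite _) ⟨S, subset_rfl, hS⟩
  exact ⟨A, hSA, hA, fun A' hAA' hA' => (hmax ⟨hSA.trans hAA', hA'⟩ hAA').antisymm hAA'⟩

theorem IsMaxIndep.isMinVC_compl_s7 {V : Type*} {G : SimpleGraph V} {A : Set V}
    (hA : IsMaxIndep G A) : IsMinVC G Aᶜ := by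
  refine ⟨fun u v huv => ?_, fun C hC hCvc => ?_⟩
  · by_contra! h
    simp only [Set.mem_compl_iff, not_not] at h
    exact hA.1 h.1 h.2 huv
  · have hCindep : IsIndep G Cᶜ := fun u v hu hv huv => (hCvc huv).elim hu hv
    rw [← compl_compl C, hA.2 Cᶜ (Set.subset_compl_comm.mp hC) hCindep]

theorem isIndep_pair {V : Type*} {G : SimpleGraph V} {u v : V} (h : ¬ G.Adj u v) :
    IsIndep G {u, v} := by
  rintro a b (rfl | rfl) (rfl | rfl) hab
  exacts [G.loopless.irrefl _ hab, h hab, h hab.symm, G.loopless.irrefl _ hab]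

section Matched

variable {n : ℕ} {G : SimpleGraph (VT n)}

theorem ncard_range_xv : (Set.range (xv : Fin n → VT n)).ncard = n := by
  rw [Set.ncard_range_of_injective (f := (xv : Fin n → VT n)) Sum.inl_injective,
    Nat.card_eq_fintype_card, Fintype.card_fin]

theorem IsMaxIndep.ncard_eq (hX : IsMinVC G (Set.range xv)) (hu : Unmixed G) {A : Set (VT n)}
    (hA : IsMaxIndep G A) : A.ncard = n := by
  have hcompl : Aᶜ.ncard = n := by rw [hu _ _ hA.isMinVC_compl_s7 hX, ncard_range_xv]
  have htotal : A.ncard + Aᶜ.ncard = n + n := by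
    rw [Set.ncard_add_ncard_compl, Nat.card_eq_fintype_card, Fintype.card_sum, Fintype.card_fin]
  omega

theorem IsIndep.ncard_lt_of_notMem_pair (hm : ∀ i, G.Adj (xv i) (yv i)) {A : Set (VT n)}
    (hA : IsIndep G A) {j : Fin n} (hxj : xv j ∉ A) (hyj : yv j ∉ A) : A.ncard < n := by
  -- folding `x_a, y_a ↦ a` is injective on `A` because every `x_a y_a` is an edge
  have hinj : Set.InjOn (Sum.elim id id) A := by
    rintro (a | a) ha (b | b) hb (rfl : a = b)
    · rfl
    · exact absurd (hm a) (hA ha hb)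
    · exact absurd (hm a) (hA hb ha)
    · rfl
  have hj : j ∉ Sum.elim id id '' A := by
    rintro ⟨a | a, ha, rfl⟩
    exacts [hxj ha, hyj ha]
  calc A.ncard = (Sum.elim id id '' A).ncard := hinj.ncard_image.symm
    _ < (Set.univ : Set (Fin n)).ncard :=
      Set.ncard_lt_ncard (Set.ssubset_univ_iff.mpr fun h => hj (h ▸ Set.mem_univ j))
    _ = n := by rw [Set.ncard_univ, Nat.card_eq_fintype_card, Fintype.card_fin]

theorem adj_yv_xv_trans (hX : IsMinVC G (Set.range xv)) (hm : ∀ i, G.Adj (xv i) (yv i))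
    (hu : Unmixed G) {i j k : Fin n} (hij : G.Adj (yv i) (xv j)) (hjk : G.Adj (yv j) (xv k)) :
    G.Adj (yv i) (xv k) := by
  by_contra hik
  obtain ⟨A, hSA, hA⟩ := (isIndep_pair hik).exists_isMaxIndep
  have hyi : yv i ∈ A := hSA (Set.mem_insert _ _)
  have hxk : xv k ∈ A := hSA (Set.mem_insert_of_mem _ rfl)
  have hlt := hA.1.ncard_lt_of_notMem_pair hm (fun h => hA.1 hyi h hij) (fun h => hA.1 h hxk hjk)
  exact hlt.ne (hA.ncard_eq hX hu)

end Matched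

theorem rel_of_rel_finRotate {α : Type*} {R : α → α → Prop} [IsTrans α R] {r : ℕ}
    {f : Fin r → α} (hf : ∀ s, R (f s) (f (finRotate r s))) (s t : Fin r) : R (f s) (f t) := by
  obtain _ | m := r
  · exact s.elim0
  have hstep (d : Fin (m + 1)) : R (f s) (f (s + 1 + d)) := by
    induction d using Fin.induction with
    | zero => simpa using hf s
    | succ d ih =>
      rw [← Fin.coeSucc_eq_succ, ← add_assoc]
      exact _root_.trans ih (finRotate_apply (s + 1 + d.castSucc) ▸ hf _)
  simpa using hstep (t - s - 1)

theorem no_C2_no_cycle_general {n : ℕ} (G : SimpleGraph (VT n))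
    (hX : IsMinVC G (Set.range (xv : Fin n → VT n)))
    (hm : ∀ i : Fin n, G.Adj (xv i) (yv i))
    (hu : Unmixed G)
    (h2 : ∀ i j : Fin n, i < j → ¬ HasC2 G i j) :
    ∀ r : ℕ, 2 ≤ r → ∀ f : Fin r → Fin n, Function.Injective f → ¬ IsCycleIn G f := by
  intro r hr f hf hcycle
  have : IsTrans (Fin n) (fun i j => G.Adj (yv i) (xv j)) :=
    ⟨fun _ _ _ => adj_yv_xv_trans hX hm hu⟩
  have hR : ∀ s t, G.Adj (yv (f s)) (xv (f t)) :=
    rel_of_rel_finRotate (R := fun i j => G.Adj (yv i) (xv j)) (fun s => (hcycle s).2)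
  have hC2 : ∀ s t, HasC2 G (f s) (f t) := fun s t => ⟨hm _, hR s t, hm _, hR t s⟩
  have hne : f ⟨0, by omega⟩ ≠ f ⟨1, by omega⟩ := hf.ne (by simp [Fin.ext_iff])
  rcases hne.lt_or_gt with hlt | hgt
  exacts [h2 _ _ hlt (hC2 _ _), h2 _ _ hgt (hC2 _ _)]

/-- If no 4-cycle `C_{ij}` is contained in the unmixed graph `G` (setup (*)), then for all
`r ≥ 2` no `2r`-cycle `C_{i_1…i_r}` is contained in `G`. -/
theorem no_C2_no_cycle {n : ℕ} (G : SimpleGraph (VT n))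
    (hni : ∀ v : VT n, ∃ u : VT n, G.Adj u v)
    (hX : IsMinVC G (Set.range (xv : Fin n → VT n)))
    (hY : IsMaxIndep G (Set.range (yv : Fin n → VT n)))
    (hm : ∀ i : Fin n, G.Adj (xv i) (yv i))
    (hht : ∀ C : Set (VT n), IsVC G C → n ≤ C.ncard)
    (hu : Unmixed G)
    (h2 : ∀ i j : Fin n, i < j → ¬ HasC2 G i j) :
    ∀ r : ℕ, 2 ≤ r → ∀ f : Fin r → Fin n, Function.Injective f → ¬ IsCycleIn G f :=
  no_C2_no_cycle_general G hX hm hu h2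
end

section
/- Let G be an unmixed graph as in the setup. If for all r ≥ 2 and all r-subsets {i_1,...,i_r} ⊆ {1,...,n} the cycle C_{i_1...i_r} is not contained in G, then {x_1y_1, ..., x_ny_n} is the unique perfect matching of G. -/
open SimpleGraph

/-- `M` is the standard matching `{x_1y_1, …, x_ny_n}`. -/
def StdPM {n : ℕ} (G : SimpleGraph (VT n)) (M : G.Subgraph) : Prop :=
  ∀ u v : VT n, M.Adj u v ↔ ∃ i : Fin n, (u = xv i ∧ v = yv i) ∨ (u = yv i ∧ v = xv i)

/-! A perfect matching `M` pairs each `y_i` with some `x_{σ i}`, since no edge of `M` lies inside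
the independent set `Y`, and `σ` is injective because `M` is a matching. If `σ ≠ id`, the orbit of
a point moved by `σ` traces a cycle `C_{i_1…i_r}` with `r ≥ 2`, alternating between the edges
`x_i y_i` and the `M`-edges `y_i x_{σ i}`. Hence `σ = id` and `M` is `{x_1y_1, …, x_ny_n}`. -/

open Function

lemma Function.exists_injective_cycle_of_mem_periodicPts {α : Type*} {g : α → α} {x : α}
    (hx : x ∈ periodicPts g) (hgx : g x ≠ x) :
    ∃ r, 2 ≤ r ∧ ∃ f : Fin r → α, Injective f ∧ ∀ s, f (finRotate r s) = g (f s) := by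
  set r := minimalPeriod g x
  have hr : 2 ≤ r := by
    have hr0 : 0 < r := minimalPeriod_pos_of_mem_periodicPts hx
    have hr1 : r ≠ 1 := fun h => hgx (minimalPeriod_eq_one_iff_isFixedPt.mp h)
    omega
  have : NeZero r := ⟨by omega⟩
  refine ⟨r, hr, fun s => g^[s] x,
    fun s t h => Fin.ext (iterate_injOn_Iio_minimalPeriod s.isLt t.isLt h), fun s => ?_⟩
  rw [finRotate_apply]
  dsimp only
  rw [Fin.val_add, Fin.val_one', Nat.add_mod_mod, iterate_mod_minimalPeriod_eq,
    iterate_succ_apply']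

lemma SimpleGraph.Subgraph.IsMatching.adj_iff_eq_of_forall_adj {V : Type*} {G : SimpleGraph V}
    {M : G.Subgraph} (hM : M.IsMatching) {σ : V → V} (hσ : ∀ u, M.Adj u (σ u)) {u v : V} :
    M.Adj u v ↔ v = σ u :=
  ⟨fun huv => hM.eq_of_adj_left huv (hσ u), fun h => h ▸ hσ u⟩

section
variable {n : ℕ} {G : SimpleGraph (VT n)}

lemma stdPM_iff (M : G.Subgraph) : StdPM G M ↔ ∀ u v, M.Adj u v ↔ v = u.swap := by
  have key : ∀ u v : VT n,
      (∃ i, (u = xv i ∧ v = yv i) ∨ (u = yv i ∧ v = xv i)) ↔ v = u.swap := by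
    rintro (i | i) (j | j) <;> simp [xv, yv, eq_comm]
  simp only [StdPM, key]

/-- The matching `{x_1y_1, …, x_ny_n}`: every vertex is joined to its twin `Sum.swap v`. -/
def swapMatching (hm : ∀ i, G.Adj (xv i) (yv i)) : G.Subgraph where
  verts := Set.univ
  Adj u v := v = u.swap
  adj_sub := by
    rintro (i | i) _ rfl
    exacts [hm i, (hm i).symm]
  edge_vert _ := Set.mem_univ _
  symm := ⟨fun u v h => by simp [h]⟩

lemma swapMatching_isPerfectMatching (hm : ∀ i, G.Adj (xv i) (yv i)) :
    (swapMatching hm).IsPerfectMatching :=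
  Subgraph.isPerfectMatching_iff.2 fun _ => existsUnique_eq

lemma exists_adj_yv_xv (hY : IsIndep G (Set.range yv)) {M : G.Subgraph}
    (hM : M.IsPerfectMatching) (i : Fin n) : ∃ j, M.Adj (yv i) (xv j) := by
  obtain ⟨w | j, hw, -⟩ := Subgraph.isPerfectMatching_iff.1 hM (yv i)
  · exact ⟨w, hw⟩
  · exact absurd (M.adj_sub hw) (hY ⟨i, rfl⟩ ⟨j, rfl⟩)

lemma exists_isCycleIn_of_adj_yv_xv (hm : ∀ i, G.Adj (xv i) (yv i)) {g : Fin n → Fin n}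
    (hg : Injective g) (hadj : ∀ i, G.Adj (yv i) (xv (g i))) (hgid : g ≠ id) :
    ∃ r, 2 ≤ r ∧ ∃ f : Fin r → Fin n, Injective f ∧ IsCycleIn G f := by
  obtain ⟨i, hi⟩ := Function.ne_iff.1 hgid
  obtain ⟨r, hr, f, hf, hrot⟩ :=
    exists_injective_cycle_of_mem_periodicPts (hg.mem_periodicPts i) hi
  exact ⟨r, hr, f, hf, fun s => ⟨hm (f s), hrot s ▸ hadj (f s)⟩⟩

end

theorem no_cycle_unique_matching_general {n : ℕ} (G : SimpleGraph (VT n))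
    (hY : IsMaxIndep G (Set.range (yv : Fin n → VT n)))
    (hm : ∀ i : Fin n, G.Adj (xv i) (yv i))
    (hnc : ∀ r : ℕ, 2 ≤ r → ∀ f : Fin r → Fin n, Function.Injective f → ¬ IsCycleIn G f) :
    (∃ M : G.Subgraph, M.IsPerfectMatching ∧ StdPM G M) ∧
      ∀ M : G.Subgraph, M.IsPerfectMatching → StdPM G M := by
  refine ⟨⟨swapMatching hm, swapMatching_isPerfectMatching hm,
    (stdPM_iff _).2 fun _ _ => .rfl⟩, fun M hM => ?_⟩
  choose g hg using exists_adj_yv_xv hY.1 hM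
  have hg_inj : Injective g := fun i i' h =>
    Sum.inr_injective (hM.1.eq_of_adj_right (hg i) (h ▸ hg i'))
  have hg_id : g = id := by
    by_contra hne
    obtain ⟨r, hr, f, hf, hcyc⟩ :=
      exists_isCycleIn_of_adj_yv_xv hm hg_inj (fun i => M.adj_sub (hg i)) hne
    exact hnc r hr f hf hcyc
  have hself : ∀ i, M.Adj (yv i) (xv i) := fun i => by simpa [hg_id] using hg i
  refine (stdPM_iff M).2 fun u v => hM.1.adj_iff_eq_of_forall_adj ?_
  rintro (i | i)
  exacts [(hself i).symm, hself i]

/-- If no cycle `C_{i_1…i_r}` (`r ≥ 2`) is contained in the unmixed graph `G` (setup (*)),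
then `{x_1y_1, …, x_ny_n}` is the unique perfect matching of `G`. -/
theorem no_cycle_unique_matching {n : ℕ} (G : SimpleGraph (VT n))
    (hni : ∀ v : VT n, ∃ u : VT n, G.Adj u v)
    (hX : IsMinVC G (Set.range (xv : Fin n → VT n)))
    (hY : IsMaxIndep G (Set.range (yv : Fin n → VT n)))
    (hm : ∀ i : Fin n, G.Adj (xv i) (yv i))
    (hht : ∀ C : Set (VT n), IsVC G C → n ≤ C.ncard)
    (hu : Unmixed G)
    (hnc : ∀ r : ℕ, 2 ≤ r → ∀ f : Fin r → Fin n, Function.Injective f → ¬ IsCycleIn G f) :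
    (∃ M : G.Subgraph, M.IsPerfectMatching ∧ StdPM G M) ∧
      ∀ M : G.Subgraph, M.IsPerfectMatching → StdPM G M :=
  no_cycle_unique_matching_general G hY hm hnc
end

section
/- Let G be an unmixed graph as in the setup containing C_{ij} for some i < j. Then every facet of the independence complex Δ(G) contains either both x_i and x_j, or both y_i and y_j. -/
open SimpleGraph

/-- If the unmixed graph `G` (setup (*)) contains `C_{ij}` for some `i < j`, then every
facet of `Δ(G)` contains both `x_i, x_j` or both `y_i, y_j`. -/
theorem facet_contains_pair {n : ℕ} (G : SimpleGraph (VT n))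
    (hni : ∀ v : VT n, ∃ u : VT n, G.Adj u v)
    (hX : IsMinVC G (Set.range (xv : Fin n → VT n)))
    (hY : IsMaxIndep G (Set.range (yv : Fin n → VT n)))
    (hm : ∀ i : Fin n, G.Adj (xv i) (yv i))
    (hht : ∀ C : Set (VT n), IsVC G C → n ≤ C.ncard)
    (hu : Unmixed G)
    (i j : Fin n) (hij : i < j) (hC : HasC2 G i j) :
    ∀ F : Set (VT n), IsMaxIndep G F →
      (xv i ∈ F ∧ xv j ∈ F) ∨ (yv i ∈ F ∧ yv j ∈ F) := by
  intro F hF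
  obtain ⟨hFind, hFmax⟩ := hF
  -- `Fᶜ` is a vertex cover
  have hvc : IsVC G Fᶜ := by
    intro u v huv
    by_contra h
    push_neg at h
    exact hFind (by simpa using h.1) (by simpa using h.2) huv
  -- `Fᶜ` is a minimal vertex cover
  have hmin : IsMinVC G Fᶜ := by
    refine ⟨hvc, fun C' hsub hvc' => ?_⟩
    have hind : IsIndep G C'ᶜ := by
      intro u v hu' hv' huv
      rcases hvc' huv with h | h
      exacts [hu' h, hv' h]
    have hsub2 : F ⊆ C'ᶜ := fun v hv hv' => (by simpa using hsub hv' : v ∉ F) hv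
    have hFC := hFmax C'ᶜ hsub2 hind
    rw [← compl_compl C', hFC]
  -- `Fᶜ` has exactly `n` elements
  have hinj : Function.Injective (xv : Fin n → VT n) := fun a b h => Sum.inl.inj h
  have hcard : (Fᶜ).ncard = n := by
    have h1 := hu Fᶜ (Set.range xv) hmin hX
    have h2 : (Set.range (xv : Fin n → VT n)).ncard = n := by
      rw [← Set.image_univ, Set.ncard_image_of_injective _ hinj, Set.ncard_univ]
      simp
    rw [h1, h2]
  set g : VT n → Fin n := Sum.elim id id with hg
  set S : Set (VT n) := Fᶜ with hS
  -- `Fᶜ` contains at least one of each pair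
  have hone : ∀ k : Fin n, xv k ∈ S ∨ yv k ∈ S := fun k => hvc (hm k)
  -- `Fᶜ` contains at most one of each pair
  have hkey : ∀ k : Fin n, xv k ∈ F ∨ yv k ∈ F := by
    intro k
    by_contra h
    push_neg at h
    have hxk : xv k ∈ S := by simpa [hS] using h.1
    have hyk : yv k ∈ S := by simpa [hS] using h.2
    have hsurj : g '' (S \ {xv k}) = Set.univ := by
      apply Set.eq_univ_of_forall
      intro k'
      by_cases hk : k' = k
      · exact ⟨yv k, ⟨hyk, by simp [yv, xv]⟩, by simp [hg, hk, yv]⟩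
      · rcases hone k' with h' | h'
        · exact ⟨xv k', ⟨h', fun e => hk (hinj (Set.mem_singleton_iff.mp e))⟩, by simp [hg, xv]⟩
        · exact ⟨yv k', ⟨h', by simp [yv, xv]⟩, by simp [hg, yv]⟩
    have h3 : (S \ {xv k}).ncard = n - 1 := by
      rw [Set.ncard_diff_singleton_of_mem hxk, hcard]
    have h4 : n ≤ (S \ {xv k}).ncard := by
      calc n = (Set.univ : Set (Fin n)).ncard := by simp [Set.ncard_univ]
        _ = (g '' (S \ {xv k})).ncard := by rw [hsurj]
        _ ≤ (S \ {xv k}).ncard := Set.ncard_image_le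
    rw [h3] at h4
    have hn : 0 < n := k.pos
    omega
  obtain ⟨e1, e2, e3, e4⟩ := hC
  rcases hkey i with hi | hi
  · left
    refine ⟨hi, ?_⟩
    rcases hkey j with hj | hj
    · exact hj
    · exact absurd e4 (fun e => hFind hj hi e)
  · right
    refine ⟨hi, ?_⟩
    rcases hkey j with hj | hj
    · exact absurd e2 (fun e => hFind hi hj e)
    · exact hj
end

section
/- Let G = G(H_0; B_1,...,B_p) be a B-grafted graph. Then X = X_1 ∪ ... ∪ X_p is a minimal vertex cover of G and Y = Y_1 ∪ ... ∪ Y_p is a maximal independent set of G; in particular the minimum vertex cover size of G is at most #X = n_1 + ... + n_p. -/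
open SimpleGraph

/-- The B-grafted graph `G(H₀; B_1, …, B_p)`. Vertices: `X = Σ i, X_i` (left) and
`Y = Σ i, Y_i` (right), where `X_i = Y_i = Fin (n i)`. The relation `b` records the edges
of the bipartite graphs `B_i` (an `X_i`-vertex and a `Y_i`-vertex with the same index `i`).
Edges of `G`: `x x'` for `x ∈ X_i`, `x' ∈ X_j` with `ij ∈ E(H₀)`, and `x y` for
`x ∈ X_i`, `y ∈ Y_i` with `xy ∈ E(B_i)`. -/
def BGraft {p : ℕ} (H0 : SimpleGraph (Fin p)) {n : Fin p → ℕ}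
    (b : (Σ i : Fin p, Fin (n i)) → (Σ i : Fin p, Fin (n i)) → Prop) :
    SimpleGraph ((Σ i : Fin p, Fin (n i)) ⊕ (Σ i : Fin p, Fin (n i))) where
  Adj u v :=
    match u, v with
    | Sum.inl a, Sum.inl a' => H0.Adj a.1 a'.1
    | Sum.inl a, Sum.inr c => a.1 = c.1 ∧ b a c
    | Sum.inr c, Sum.inl a => a.1 = c.1 ∧ b a c
    | Sum.inr _, Sum.inr _ => False
  symm := by
    constructor
    rintro (a | c) (a' | c') h
    · exact H0.adj_symm h
    · exact h
    · exact h
    · exact h.elim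
  loopless := by
    constructor
    rintro (a | c) h
    · exact H0.irrefl h
    · exact h

/-- The bipartite graph `B_i`, on vertex set `X_i ⊕ Y_i`. -/
def BiGraph {p : ℕ} {n : Fin p → ℕ}
    (b : (Σ i : Fin p, Fin (n i)) → (Σ i : Fin p, Fin (n i)) → Prop) (i : Fin p) :
    SimpleGraph (Fin (n i) ⊕ Fin (n i)) where
  Adj u v :=
    match u, v with
    | Sum.inl a, Sum.inr c => b ⟨i, a⟩ ⟨i, c⟩
    | Sum.inr c, Sum.inl a => b ⟨i, a⟩ ⟨i, c⟩
    | _, _ => False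
  symm := by constructor; rintro (a | c) (a' | c') h <;> exact h
  loopless := by constructor; rintro (a | c) h <;> exact h

/-! A vertex set is a minimal vertex cover exactly when its complement is a maximal independent
set. In the grafted graph `Y` is independent, and since the `B_i` have no isolated vertices
every vertex of `X` has a neighbour in `Y`; so `Y` is a maximal independent set and `X = Yᶜ` is a
minimal vertex cover. -/

section CoverIndep

variable {V : Type*} {G : SimpleGraph V} {A : Set V}

theorem isVC_compl_iff_isIndep : IsVC G Aᶜ ↔ IsIndep G A := by
  refine ⟨fun h u v hu hv huv => ?_, fun h u v huv => ?_⟩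
  · rcases h huv with hu' | hv'
    exacts [hu' hu, hv' hv]
  · by_contra! hc
    exact h (Set.notMem_compl_iff.1 hc.1) (Set.notMem_compl_iff.1 hc.2) huv

theorem isMinVC_compl_iff_isMaxIndep : IsMinVC G Aᶜ ↔ IsMaxIndep G A := by
  refine and_congr isVC_compl_iff_isIndep ⟨fun h A' hA hA' => ?_, fun h C hC hC' => ?_⟩
  · rw [← compl_inj_iff]
    exact h A'ᶜ (Set.compl_subset_compl.2 hA) (isVC_compl_iff_isIndep.2 hA')
  · rw [← compl_compl C, compl_inj_iff]
    exact h Cᶜ (Set.subset_compl_comm.1 hC) (isVC_compl_iff_isIndep.1 (by rwa [compl_compl]))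

theorem isMaxIndep_of_forall_exists_adj (hA : IsIndep G A)
    (hdom : ∀ v ∉ A, ∃ w ∈ A, G.Adj v w) : IsMaxIndep G A := by
  refine ⟨hA, fun A' hAA' hA' => Set.Subset.antisymm (fun v hv => ?_) hAA'⟩
  by_contra hvA
  obtain ⟨w, hw, hvw⟩ := hdom v hvA
  exact hA' hv (hAA' hw) hvw

end CoverIndep

section BGraft

variable {p : ℕ} (H0 : SimpleGraph (Fin p)) {n : Fin p → ℕ}
  (b : (Σ i : Fin p, Fin (n i)) → (Σ i : Fin p, Fin (n i)) → Prop)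

theorem isIndep_bGraft_range_inr : IsIndep (BGraft H0 b) (Set.range Sum.inr) := by
  rintro _ _ ⟨c, rfl⟩ ⟨c', rfl⟩ h
  exact h

theorem isMaxIndep_bGraft_range_inr
    (hb : ∀ (i : Fin p) (a : Fin (n i)), ∃ c : Fin (n i), b ⟨i, a⟩ ⟨i, c⟩) :
    IsMaxIndep (BGraft H0 b) (Set.range Sum.inr) := by
  refine isMaxIndep_of_forall_exists_adj (isIndep_bGraft_range_inr H0 b) ?_
  rintro (⟨i, a⟩ | c) hv
  · obtain ⟨c, hc⟩ := hb i a
    exact ⟨Sum.inr ⟨i, c⟩, Set.mem_range_self _, rfl, hc⟩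
  · exact absurd (Set.mem_range_self c) hv

end BGraft

theorem bgraft_cover_indep_general {p : ℕ} (H0 : SimpleGraph (Fin p)) {n : Fin p → ℕ}
    (b : (Σ i : Fin p, Fin (n i)) → (Σ i : Fin p, Fin (n i)) → Prop)
    (hb1 : ∀ (i : Fin p) (a : Fin (n i)), ∃ c : Fin (n i), b ⟨i, a⟩ ⟨i, c⟩) :
    IsMinVC (BGraft H0 b) (Set.range Sum.inl) ∧
      IsMaxIndep (BGraft H0 b) (Set.range Sum.inr) ∧
      (Set.range (Sum.inl : (Σ i : Fin p, Fin (n i)) →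
          (Σ i : Fin p, Fin (n i)) ⊕ (Σ i : Fin p, Fin (n i)))).ncard = ∑ i : Fin p, n i := by
  have hY := isMaxIndep_bGraft_range_inr H0 b hb1
  refine ⟨?_, hY, ?_⟩
  · rw [← Set.compl_range_inr]
    exact isMinVC_compl_iff_isMaxIndep.2 hY
  · rw [Set.ncard_range_of_injective Sum.inl_injective, Nat.card_sigma]
    simp

/-- In the B-grafted graph `G(H₀; B_1,…,B_p)` (with the `B_i` having no isolated vertices),
`X` is a minimal vertex cover and `Y` is a maximal independent set; in particular the
minimum vertex cover size is at most `#X = n_1 + ⋯ + n_p`. -/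
theorem bgraft_cover_indep {p : ℕ} (H0 : SimpleGraph (Fin p)) {n : Fin p → ℕ}
    (b : (Σ i : Fin p, Fin (n i)) → (Σ i : Fin p, Fin (n i)) → Prop)
    (hb1 : ∀ (i : Fin p) (a : Fin (n i)), ∃ c : Fin (n i), b ⟨i, a⟩ ⟨i, c⟩)
    (hb2 : ∀ (i : Fin p) (c : Fin (n i)), ∃ a : Fin (n i), b ⟨i, a⟩ ⟨i, c⟩) :
    IsMinVC (BGraft H0 b) (Set.range Sum.inl) ∧
      IsMaxIndep (BGraft H0 b) (Set.range Sum.inr) ∧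
      (Set.range (Sum.inl : (Σ i : Fin p, Fin (n i)) →
          (Σ i : Fin p, Fin (n i)) ⊕ (Σ i : Fin p, Fin (n i)))).ncard = ∑ i : Fin p, n i :=
  bgraft_cover_indep_general H0 b hb1
end
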